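/- For all n, r ≥ 0, G_{a,b}(n;r) = Σ_{i=0}^{n} C(n,i) · G_{a,b}(n−i;0) · ∏_{j=0}^{i−1}(a·j + (a+b)·r), where G_{a,b}(n;r) := Σ_{k=0}^{n} G_{a,b}(n,k;r). -/

import Mathlib

/-!
Expanding each `G_{a,b}(n,k;r)` as a binomial convolution
`∑ i, C(n,i) G_{a,b}(n-i,k;0) ∏_{j<i} (a j + (a+b) r)` and summing over `k` gives the identity.
The convolution is proved by induction on `n`: in the recurrence, the weight of the `i`-th term
splits as `a n + b k + (a+b) r = (a (n-i) + b k) + (a i + (a+b) r)`, the first part advancing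
`G_{a,b}(n-i,k;0)` and the second the product, and Pascal's rule recombines the two sums.
-/

open Finset

/-- The generalized r-Lah numbers `G_{a,b}(n,k;r)`. -/
def genLah {R : Type*} [CommRing R] (a b : R) (r : ℕ) : ℕ → ℕ → R
  | 0, 0 => 1
  | 0, _ + 1 => 0
  | n + 1, 0 => (a * ((n : R) + (r : R)) + b * (r : R)) * genLah a b r n 0
  | n + 1, k + 1 => genLah a b r n k +
      (a * (n : R) + b * ((k : R) + 1) + (a + b) * (r : R)) * genLah a b r n (k + 1)

section genLah

variable {R : Type*} [CommRing R] (a b : R) (r : ℕ)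

theorem genLah_eq_zero_of_lt {n k : ℕ} (h : n < k) : genLah a b r n k = 0 := by
  induction n generalizing k with
  | zero => obtain ⟨k, rfl⟩ := Nat.exists_eq_add_of_lt h; rfl
  | succ n ih =>
    obtain ⟨k, rfl⟩ : ∃ k', k = k' + 1 := Nat.exists_eq_add_one.mpr (by omega)
    simp only [genLah, ih (by omega : n < k), ih (by omega : n < k + 1), mul_zero, add_zero]

theorem genLah_succ (n k : ℕ) :
    genLah a b r (n + 1) k = (if k = 0 then 0 else genLah a b r n (k - 1)) +
      (a * n + b * k + (a + b) * r) * genLah a b r n k := by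
  cases k with
  | zero => simp only [genLah, if_pos]; ring
  | succ k => simp [genLah]

theorem sum_range_genLah_of_le {m N : ℕ} (h : m ≤ N) :
    ∑ k ∈ range (N + 1), genLah a b r m k = ∑ k ∈ range (m + 1), genLah a b r m k :=
  (sum_subset (range_subset_range.2 (by omega)) fun _ _ hk =>
    genLah_eq_zero_of_lt a b r (by simpa using hk)).symm

theorem genLah_eq_sum_choose (n k : ℕ) :
    genLah a b r n k = ∑ i ∈ range (n + 1), (n.choose i : R) *
      (genLah a b 0 (n - i) k * ∏ j ∈ range i, (a * j + (a + b) * r)) := by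
  induction n generalizing k with
  | zero => cases k <;> simp [genLah]
  | succ n ih =>
    have hsplit : ∀ i ∈ range (n + 1),
        (n.choose i : R) * (genLah a b 0 (n + 1 - i) k * ∏ j ∈ range i, (a * j + (a + b) * r)) +
          n.choose i * (genLah a b 0 (n - i) k * ∏ j ∈ range (i + 1), (a * j + (a + b) * r)) =
        (if k = 0 then 0 else
            n.choose i * (genLah a b 0 (n - i) (k - 1) * ∏ j ∈ range i, (a * j + (a + b) * r))) +
          (a * n + b * k + (a + b) * r) *
            (n.choose i * (genLah a b 0 (n - i) k * ∏ j ∈ range i, (a * j + (a + b) * r))) := by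
      intro i hi
      have hin : i ≤ n := Nat.lt_succ_iff.mp (mem_range.mp hi)
      rw [show n + 1 - i = n - i + 1 by omega, genLah_succ, prod_range_succ, Nat.cast_sub hin]
      split_ifs <;> ring
    rw [sum_choose_succ_mul (fun i m => genLah a b 0 m k * ∏ j ∈ range i, (a * j + (a + b) * r)),
      ← sum_add_distrib, sum_congr rfl hsplit, sum_add_distrib, sum_ite_irrel, sum_const_zero,
      ← mul_sum, ← ih, ← ih, genLah_succ]

end genLah

theorem genLah_rowSum_from_zero {R : Type*} [CommRing R] (a b : R) (r n : ℕ) :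
    (∑ k ∈ range (n + 1), genLah a b r n k) =
      ∑ i ∈ range (n + 1), (n.choose i : R) *
        (∑ k ∈ range (n - i + 1), genLah a b 0 (n - i) k) *
        ∏ j ∈ range i, (a * (j : R) + (a + b) * (r : R)) := by
  simp only [genLah_eq_sum_choose a b r n]
  rw [sum_comm]
  refine sum_congr rfl fun i _ => ?_
  rw [← sum_range_genLah_of_le a b 0 (Nat.sub_le n i), mul_sum, sum_mul]
  simp only [mul_assoc]
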